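/- arXiv:2602.18756 — 2 statements merged into one kernel-verified Lean document; each statement's English description precedes it below -/
import Mathlib

section
/- For fixed γ ∈ (0,1), there exists a real constant d such that the sequence S_k := Σ_{r=1}^k (Γ(r+γ)/Γ(r+1)) r^{1−γ} satisfies S_k = k − (γ(1−γ)/2) log k + d + o(1) as k → ∞. -/
/-!
Write `a r = Γ(r + γ) / Γ(r + 1) · r ^ (1 - γ) = Γ(r + γ) / (Γ(r) r ^ γ)`, `u r = log a r` and
`c = γ(1 - γ) / 2`. The functional equation of `Γ` gives
`u (r + 1) - u r = log (1 + γ / r) - γ log (1 + 1 / r) = c (1 / r - 1 / (r + 1)) + O(r⁻³)`,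
and log-convexity of `Γ` squeezes `a r` between `(1 - 1 / r) ^ γ` and `1`, so `u r → 0`.
Summing the increments from `r` to `∞` gives `u r = -c / r + O(r⁻²)`, hence
`a r = 1 - c / r + O(r⁻²)`. The error terms are summable and `∑_{r ≤ k} 1 / r = log k + γ_E + o(1)`,
which yields the claim with `d = ∑_r (a r - 1 + c / r) - c γ_E`.
-/

open Filter Finset Real Topology Asymptotics

lemma exists_tendsto_sum_Icc_sub_log {f : ℕ → ℝ} {c : ℝ}
    (hf : Summable fun r : ℕ => f r - 1 + c / r) :
    ∃ d : ℝ, Tendsto (fun k : ℕ => ∑ r ∈ Icc 1 k, f r - (k - c * log k + d)) atTop (𝓝 0) := by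
  set w : ℕ → ℝ := fun r => f (r + 1) - 1 + c / (r + 1)
  have hw : Summable w := by
    simpa [w] using (summable_nat_add_iff 1).mpr hf
  refine ⟨∑' r, w r - c * eulerMascheroniConstant, ?_⟩
  have hsplit (k : ℕ) :
      ∑ r ∈ Icc 1 k, f r - (k - c * log k + (∑' r, w r - c * eulerMascheroniConstant)) =
        (∑ r ∈ range k, w r - ∑' r, w r) - c * (harmonic k - log k - eulerMascheroniConstant) := by
    have hIcc : ∑ r ∈ Icc 1 k, f r = ∑ r ∈ range k, f (r + 1) := by
      rw [range_eq_Ico, sum_Ico_add' f 0 k 1]; rfl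
    have hw_sum : ∑ r ∈ range k, w r = ∑ r ∈ range k, f (r + 1) - k + c * harmonic k := by
      simp [w, harmonic, sum_add_distrib, mul_sum, div_eq_mul_inv]
    rw [hIcc, hw_sum]
    ring
  have h1 := hw.hasSum.tendsto_sum_nat.sub_const (∑' r, w r)
  have h2 := (tendsto_harmonic_sub_log.sub_const eulerMascheroniConstant).const_mul c
  simpa [hsplit] using h1.sub h2

lemma abs_le_of_tendsto_zero_of_abs_sub_le {v g : ℕ → ℝ} {k : ℕ}
    (hv : Tendsto v atTop (𝓝 0)) (hg : Tendsto g atTop (𝓝 0))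
    (hstep : ∀ j ≥ k, |v (j + 1) - v j| ≤ g j - g (j + 1)) : |v k| ≤ g k := by
  have htel (m : ℕ) : |v (m + k) - v k| ≤ g k - g (m + k) := by
    induction m with
    | zero => simp
    | succ m ih =>
      rw [add_right_comm]
      calc |v (m + k + 1) - v k| ≤ |v (m + k + 1) - v (m + k)| + |v (m + k) - v k| :=
            abs_sub_le _ _ _
        _ ≤ g k - g (m + k + 1) := by linarith [hstep (m + k) (Nat.le_add_left k m)]
  have hv' := ((tendsto_add_atTop_iff_nat k).mpr hv).sub_const (v k) |>.abs
  have hg' := ((tendsto_add_atTop_iff_nat k).mpr hg).const_sub (g k)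
  simpa using le_of_tendsto_of_tendsto' hv' hg' htel

lemma abs_log_one_add_sub_le {t : ℝ} (h0 : 0 ≤ t) (h1 : t ≤ 1 / 2) :
    |log (1 + t) - (t - t ^ 2 / 2)| ≤ 2 * t ^ 3 := by
  have h := abs_log_sub_add_sum_range_le
    (show |-t| < 1 by rw [abs_neg, abs_of_nonneg h0]; linarith) 2
  norm_num [sum_range_succ, abs_of_nonneg h0] at h
  calc |log (1 + t) - (t - t ^ 2 / 2)| = |-t + t ^ 2 / 2 + log (1 + t)| := by congr 1; ring
    _ ≤ t ^ 3 / (1 - t) := h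
    _ ≤ 2 * t ^ 3 := by
        rw [div_le_iff₀ (by linarith)]
        nlinarith [pow_nonneg h0 3]

lemma one_div_pow_three_le {x : ℝ} (hx : 1 ≤ x) :
    1 / x ^ 3 ≤ 2 * (1 / x ^ 2 - 1 / (x + 1) ^ 2) := by
  rw [div_sub_div _ _ (by positivity) (by positivity), mul_div_assoc',
    div_le_div_iff₀ (by positivity) (by positivity)]
  nlinarith [pow_pos (by linarith : (0:ℝ) < x) 3]

lemma abs_log_step_sub_le {γ x : ℝ} (hγ0 : 0 ≤ γ) (hγ1 : γ ≤ 1) (hx : 2 ≤ x) :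
    |log (1 + γ / x) - γ * log (1 + 1 / x) - γ * (1 - γ) / 2 * (1 / x - 1 / (x + 1))| ≤
      5 / x ^ 3 := by
  have hx0 : 0 < x := by linarith
  set eγ := log (1 + γ / x) - (γ / x - (γ / x) ^ 2 / 2)
  set e1 := log (1 + 1 / x) - (1 / x - (1 / x) ^ 2 / 2)
  set r := γ * (1 - γ) / 2 / (x ^ 2 * (x + 1))
  have hsplit : log (1 + γ / x) - γ * log (1 + 1 / x) - γ * (1 - γ) / 2 * (1 / x - 1 / (x + 1))
      = eγ - γ * e1 + r := by
    simp only [eγ, e1, r]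
    field_simp
    ring
  have heγ : |eγ| ≤ 2 * (1 / x ^ 3) := by
    refine (abs_log_one_add_sub_le (t := γ / x) (by positivity)
      (by rw [div_le_iff₀ hx0]; linarith)).trans ?_
    rw [div_pow]
    gcongr
    exact pow_le_one₀ hγ0 hγ1
  have he1 : γ * |e1| ≤ 2 * (1 / x ^ 3) := by
    refine (mul_le_of_le_one_left (abs_nonneg _) hγ1).trans ?_
    refine (abs_log_one_add_sub_le (t := 1 / x) (by positivity)
      (by rw [div_le_iff₀ hx0]; linarith)).trans ?_
    rw [div_pow, one_pow]
  have hr0 : 0 ≤ r := by have := sub_nonneg.2 hγ1; positivity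
  have hr : r ≤ 1 / x ^ 3 := by
    have hq : γ * (1 - γ) ≤ 1 / 4 := by nlinarith [sq_nonneg (γ - 1 / 2)]
    rw [div_le_div_iff₀ (by positivity) (by positivity)]
    nlinarith [mul_le_mul_of_nonneg_right hq (pow_pos hx0 3).le, pow_pos hx0 2]
  calc |log (1 + γ / x) - γ * log (1 + 1 / x) - γ * (1 - γ) / 2 * (1 / x - 1 / (x + 1))|
      ≤ |eγ - γ * e1| + |r| := by rw [hsplit]; exact abs_add_le _ _
    _ ≤ |eγ| + γ * |e1| + r := by
        rw [abs_of_nonneg hr0, ← abs_of_nonneg hγ0, ← abs_mul, abs_of_nonneg hγ0]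
        gcongr
        exact abs_sub _ _
    _ ≤ 5 / x ^ 3 := by
        rw [show 5 / x ^ 3 = 2 * (1 / x ^ 3) + 2 * (1 / x ^ 3) + 1 / x ^ 3 by ring]
        gcongr

noncomputable def gammaRatio (γ x : ℝ) : ℝ := Gamma (x + γ) / Gamma (x + 1) * x ^ (1 - γ)

lemma gammaRatio_pos {γ x : ℝ} (hγ : 0 ≤ γ) (hx : 0 < x) : 0 < gammaRatio γ x := by
  have := Gamma_pos_of_pos (show 0 < x + γ by linarith)
  have := Gamma_pos_of_pos (show 0 < x + 1 by linarith)
  unfold gammaRatio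
  positivity

lemma log_Gamma_add_one {y : ℝ} (hy : 0 < y) : log (Gamma (y + 1)) = log (Gamma y) + log y := by
  rw [Gamma_add_one hy.ne', log_mul hy.ne' (Gamma_pos_of_pos hy).ne', add_comm]

lemma log_gammaRatio {γ x : ℝ} (hγ : 0 ≤ γ) (hx : 0 < x) :
    log (gammaRatio γ x) = log (Gamma (x + γ)) - log (Gamma x) - γ * log x := by
  have hΓ : 0 < Gamma (x + γ) := Gamma_pos_of_pos (by linarith)
  rw [gammaRatio,
    log_mul (div_pos hΓ (Gamma_pos_of_pos (by linarith))).ne' (rpow_pos_of_pos hx _).ne',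
    log_div hΓ.ne' (Gamma_pos_of_pos (by linarith)).ne', log_Gamma_add_one hx, log_rpow hx]
  ring

lemma log_gammaRatio_add_one {γ x : ℝ} (hγ : 0 ≤ γ) (hx : 0 < x) :
    log (gammaRatio γ (x + 1)) =
      log (gammaRatio γ x) + (log (1 + γ / x) - γ * log (1 + 1 / x)) := by
  have hxγ : 0 < x + γ := by linarith
  have hlog (a : ℝ) (ha : 0 < x + a) : log (1 + a / x) = log (x + a) - log x := by
    rw [← log_div ha.ne' hx.ne', add_div, div_self hx.ne']
  rw [log_gammaRatio hγ hx, log_gammaRatio hγ (by linarith), add_right_comm, log_Gamma_add_one hxγ,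
    log_Gamma_add_one hx, hlog γ hxγ, hlog 1 (by linarith)]
  ring

lemma tendsto_log_gammaRatio_nat {γ : ℝ} (hγ0 : 0 < γ) (hγ1 : γ ≤ 1) :
    Tendsto (fun n : ℕ => log (gammaRatio γ n)) atTop (𝓝 0) := by
  have hfeq {y : ℝ} (hy : 0 < y) : (log ∘ Gamma) (y + 1) = (log ∘ Gamma) y + log y :=
    log_Gamma_add_one hy
  have hupper (n : ℕ) (hn : n ≠ 0) : log (gammaRatio γ n) ≤ 0 := by
    have := BohrMollerup.f_add_nat_le convexOn_log_Gamma hfeq hn hγ0 hγ1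
    rw [log_gammaRatio hγ0.le (by positivity)]
    simp only [Function.comp_apply] at this
    linarith
  have hlower (n : ℕ) (hn : 1 ≤ n) :
      γ * (log n - log (n + 1)) ≤ log (gammaRatio γ (n + 1 : ℕ)) := by
    have := BohrMollerup.f_add_nat_ge convexOn_log_Gamma hfeq (by omega : 2 ≤ n + 1) hγ0
    rw [log_gammaRatio hγ0.le (by positivity)]
    simp only [Function.comp_apply, Nat.cast_add, Nat.cast_one, add_sub_cancel_right] at this ⊢
    linarith
  rw [← tendsto_add_atTop_iff_nat 1]
  have hlim : Tendsto (fun n : ℕ => γ * (log n - log (n + 1))) atTop (𝓝 0) := by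
    simpa using (tendsto_log_nat_add_one_sub_log.neg).const_mul γ
  refine tendsto_of_tendsto_of_tendsto_of_le_of_le' hlim tendsto_const_nhds ?_ ?_
  · filter_upwards [eventually_ge_atTop 1] with n hn using hlower n hn
  · exact Eventually.of_forall fun n => hupper (n + 1) n.succ_ne_zero

lemma abs_log_gammaRatio_add_le {γ : ℝ} (hγ0 : 0 < γ) (hγ1 : γ ≤ 1) {k : ℕ} (hk : 2 ≤ k) :
    |log (gammaRatio γ k) + γ * (1 - γ) / 2 / k| ≤ 10 / (k : ℝ) ^ 2 := by
  refine abs_le_of_tendsto_zero_of_abs_sub_le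
    (v := fun n : ℕ => log (gammaRatio γ n) + γ * (1 - γ) / 2 / n)
    (g := fun n : ℕ => 10 / (n : ℝ) ^ 2) ?_ ?_ (fun j hj => ?_)
  · simpa using (tendsto_log_gammaRatio_nat hγ0 hγ1).add
      (tendsto_const_div_atTop_nhds_zero_nat _)
  · exact tendsto_const_nhds.div_atTop
      ((tendsto_pow_atTop two_ne_zero).comp tendsto_natCast_atTop_atTop)
  · have hj' : (2 : ℝ) ≤ j := by exact_mod_cast hj.trans' hk
    have hstep := abs_log_step_sub_le hγ0.le hγ1 hj'
    have htel := one_div_pow_three_le (by linarith : (1 : ℝ) ≤ j)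
    simp only [Nat.cast_add, Nat.cast_one]
    rw [log_gammaRatio_add_one hγ0.le (by linarith)]
    calc _ = |log (1 + γ / j) - γ * log (1 + 1 / j) - γ * (1 - γ) / 2 * (1 / j - 1 / (j + 1))| := by
          congr 1; ring
      _ ≤ 5 * (1 / (j : ℝ) ^ 3) := hstep.trans_eq (by ring)
      _ ≤ 5 * (2 * (1 / (j : ℝ) ^ 2 - 1 / ((j : ℝ) + 1) ^ 2)) := by gcongr
      _ = 10 / (j : ℝ) ^ 2 - 10 / ((j : ℝ) + 1) ^ 2 := by ring

lemma summable_gammaRatio_sub_one_add {γ : ℝ} (hγ0 : 0 < γ) (hγ1 : γ ≤ 1) :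
    Summable fun r : ℕ => gammaRatio γ r - 1 + γ * (1 - γ) / 2 / r := by
  set c := γ * (1 - γ) / 2
  set u : ℕ → ℝ := fun n => log (gammaRatio γ n)
  have hv : (fun n : ℕ => u n + c / n) =O[atTop] fun n : ℕ => ((n : ℝ) ^ 2)⁻¹ := by
    refine IsBigO.of_bound 10 ?_
    filter_upwards [eventually_ge_atTop 2] with n hn
    simpa [u, c, div_eq_mul_inv] using abs_log_gammaRatio_add_le hγ0 hγ1 hn
  have hinv : (fun n : ℕ => ((n : ℝ) ^ 2)⁻¹) =O[atTop] fun n : ℕ => (n : ℝ)⁻¹ := by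
    refine IsBigO.of_bound 1 ?_
    filter_upwards [eventually_ge_atTop 1] with n hn
    have hn' : (1 : ℝ) ≤ n := by exact_mod_cast hn
    simp only [norm_inv, norm_pow, RCLike.norm_natCast, one_mul]
    exact inv_anti₀ (by positivity) (by nlinarith)
  have hu : u =O[atTop] fun n : ℕ => (n : ℝ)⁻¹ := by
    have hsplit : u = fun n => (u n + c / n) - c * (n : ℝ)⁻¹ := by ext; ring
    rw [hsplit]
    exact (hv.trans hinv).sub ((isBigO_refl _ _).const_mul_left c)
  have hexp : (fun n => exp (u n) - 1 - u n) =O[atTop] fun n => u n ^ 2 := by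
    refine IsBigO.of_bound 1 ?_
    filter_upwards [(tendsto_log_gammaRatio_nat hγ0 hγ1).eventually
      (Metric.closedBall_mem_nhds 0 one_pos)] with n hn
    simpa [Real.dist_eq] using
      abs_exp_sub_one_sub_id_le (x := u n) (by simpa [Real.dist_eq] using hn)
  have hsq : (fun n => u n ^ 2) =O[atTop] fun n : ℕ => ((n : ℝ) ^ 2)⁻¹ := by
    simpa [inv_pow] using hu.pow 2
  refine summable_of_isBigO_nat (summable_nat_pow_inv.2 one_lt_two)
    (((hexp.trans hsq).add hv).congr' ?_ EventuallyEq.rfl)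
  filter_upwards [eventually_ge_atTop 1] with n hn
  rw [exp_log (gammaRatio_pos hγ0.le (by exact_mod_cast hn))]
  ring

theorem Sk_asymptotics (γ : ℝ) (hγ : γ ∈ Set.Ioo (0:ℝ) 1) :
    ∃ d : ℝ,
      Tendsto (fun k : ℕ =>
          (∑ r ∈ Finset.Icc 1 k,
            (Real.Gamma ((r : ℝ) + γ) / Real.Gamma ((r : ℝ) + 1)) * (r : ℝ) ^ (1 - γ))
          - ((k : ℝ) - (γ * (1 - γ) / 2) * Real.log k + d))
        atTop (nhds 0) :=
  exists_tendsto_sum_Icc_sub_log (f := fun r : ℕ => gammaRatio γ r)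
    (summable_gammaRatio_sub_one_add hγ.1 hγ.2.le)
end

section
/- Let γ ∈ (0,1) and let U : ℕ → ℝ be regularly varying with index γ, i.e. U(⌊cn⌋)/U(n) → c^γ as n → ∞ for every fixed c ≥ 1, with U(n) > 0. Fix ρ ∈ (0,1]. Then liminf over n → ∞ of inf{ m/n : m ≥ n, ρ·U(m) ≥ U(n) } equals ρ^{−1/γ}. -/
/-!
The infimum even converges. From above: at any `c > ρ ^ (-1 / γ)` the pointwise limit
`U ⌊c n⌋ / U n → c ^ γ > ρ⁻¹` makes `m = ⌊c n⌋` admissible. From below: for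
`b < ρ ^ (-1 / γ)` the uniform convergence theorem gives `U m < ρ⁻¹ U n` for all
`n ≤ m ≤ b n`, so no such `m` is admissible.

The uniform bound comes from Egorov's theorem on `[1, b + 1]`: outside a set `t` of measure `ε`
the convergence is uniform, and for `r = m / n ∈ [1, b]` some `s ∈ [b, b + 1]` has both `s` and
`s / r` outside `t`. Since `⌊(s / r) m⌋ = ⌊s n⌋`, comparing `U ⌊s n⌋` with both `U n` and `U m`
bounds `U m / U n` by roughly `r ^ γ ≤ b ^ γ`.
-/

open Filter MeasureTheory Set

lemma exists_mem_Icc_notMem_notMem_div {t : Set ℝ} {a b r : ℝ} (hr : 0 < r)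
    (ht : volume t + ENNReal.ofReal r * volume t < ENNReal.ofReal (b - a)) :
    ∃ s ∈ Icc a b, s ∉ t ∧ s / r ∉ t := by
  by_contra! hcover
  have hsub : Icc a b ⊆ t ∪ (· / r) ⁻¹' t := fun s hs => by
    by_cases hst : s ∈ t
    · exact Or.inl hst
    · exact Or.inr (hcover s hs hst)
  have hscale : volume ((· / r) ⁻¹' t) = ENNReal.ofReal r * volume t := by
    simpa [div_eq_mul_inv, abs_of_pos hr] using
      Real.volume_preimage_mul_right (inv_ne_zero hr.ne') t
  refine ht.not_ge ?_
  calc ENNReal.ofReal (b - a) = volume (Icc a b) := Real.volume_Icc.symm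
    _ ≤ volume (t ∪ (· / r) ⁻¹' t) := measure_mono hsub
    _ ≤ volume t + volume ((· / r) ⁻¹' t) := measure_union_le _ _
    _ = volume t + ENNReal.ofReal r * volume t := by rw [hscale]

lemma lt_mul_of_div_bounds {x y z A T ε : ℝ} (hx : 0 < x) (hy : 0 < y) (hA : 0 < A)
    (hT : 0 < T) (hε : ε < 1) (hzy : z / y < (1 + ε) * A) (hzx : (1 - ε) * (A / T) < z / x) :
    x < (1 + ε) / (1 - ε) * T * y := by
  rw [div_lt_iff₀ hy] at hzy
  rw [lt_div_iff₀ hx, mul_div_assoc', div_mul_eq_mul_div, div_lt_iff₀ hT] at hzx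
  have hε' : 0 < 1 - ε := by linarith
  rw [div_mul_eq_mul_div, div_mul_eq_mul_div, lt_div_iff₀ hε']
  nlinarith [mul_pos hA hε']

lemma lt_mul_of_bounds_off_small_set {U : ℕ → ℝ} (hUpos : ∀ n, 0 < U n) {γ b ε : ℝ}
    (hγ : 0 ≤ γ) (hb : 1 ≤ b) (hε0 : 0 < ε) (hεb : ε * (1 + b) < 1) {t : Set ℝ}
    (htε : volume t ≤ ENNReal.ofReal ε) {n m : ℕ} (hn : 1 ≤ n) (hnm : n ≤ m)
    (hmb : (m : ℝ) ≤ b * n)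
    (hbounds : ∀ k, n ≤ k → ∀ c ∈ Icc 1 (b + 1) \ t,
      (1 - ε) * c ^ γ < U ⌊c * (k : ℝ)⌋₊ / U k ∧ U ⌊c * (k : ℝ)⌋₊ / U k < (1 + ε) * c ^ γ) :
    U m < (1 + ε) / (1 - ε) * b ^ γ * U n := by
  have hε1 : ε < 1 := by nlinarith
  have hn0 : (0 : ℝ) < n := by exact_mod_cast hn
  set r : ℝ := m / n with hr
  have hr1 : 1 ≤ r := (one_le_div hn0).2 (by exact_mod_cast hnm)
  have hrb : r ≤ b := (div_le_iff₀ hn0).2 hmb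
  have hr0 : 0 < r := one_pos.trans_le hr1
  have hvol : volume t + ENNReal.ofReal r * volume t < ENNReal.ofReal (b + 1 - b) := by
    calc volume t + ENNReal.ofReal r * volume t
        ≤ ENNReal.ofReal ε + ENNReal.ofReal r * ENNReal.ofReal ε := by gcongr
      _ = ENNReal.ofReal (ε + r * ε) := by
        rw [← ENNReal.ofReal_mul hr0.le, ← ENNReal.ofReal_add hε0.le (by positivity)]
      _ < ENNReal.ofReal (b + 1 - b) :=
        ENNReal.ofReal_lt_ofReal_iff'.2 ⟨by nlinarith, by norm_num⟩
  obtain ⟨s, hs, hst, hsrt⟩ := exists_mem_Icc_notMem_notMem_div hr0 hvol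
  have hs0 : 0 < s := by linarith [hs.1]
  have hfloor : ⌊s / r * m⌋₊ = ⌊s * n⌋₊ := by
    rw [hr, div_div_eq_mul_div, div_mul_cancel₀ _ (hn0.trans_le (Nat.cast_le.2 hnm)).ne']
  have hn_bd := (hbounds n le_rfl s ⟨⟨hb.trans hs.1, hs.2⟩, hst⟩).2
  have hm_bd := (hbounds m hnm (s / r)
    ⟨⟨(one_le_div hr0).2 (hrb.trans hs.1), (div_le_self hs0.le hr1).trans hs.2⟩, hsrt⟩).1
  rw [hfloor, Real.div_rpow hs0.le hr0.le] at hm_bd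
  have hε' : 0 < 1 - ε := by linarith
  have hUn := (hUpos n).le
  calc U m < (1 + ε) / (1 - ε) * r ^ γ * U n :=
        lt_mul_of_div_bounds (hUpos m) (hUpos n) (by positivity) (by positivity) hε1 hn_bd hm_bd
    _ ≤ (1 + ε) / (1 - ε) * b ^ γ * U n := by gcongr

def IsRegularlyVarying (U : ℕ → ℝ) (γ : ℝ) : Prop :=
  ∀ c : ℝ, 1 ≤ c → Tendsto (fun n : ℕ => U ⌊c * (n : ℝ)⌋₊ / U n) atTop (nhds (c ^ γ))

namespace IsRegularlyVarying

variable {U : ℕ → ℝ} {γ : ℝ}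

lemma exists_volume_le_eventually_bounds (hU : IsRegularlyVarying U γ) (hγ : 0 ≤ γ)
    (K : ℝ) {ε : ℝ} (hε : 0 < ε) :
    ∃ t : Set ℝ, volume t ≤ ENNReal.ofReal ε ∧ ∀ᶠ k : ℕ in atTop, ∀ c ∈ Icc 1 K \ t,
      (1 - ε) * c ^ γ < U ⌊c * (k : ℝ)⌋₊ / U k ∧ U ⌊c * (k : ℝ)⌋₊ / U k < (1 + ε) * c ^ γ := by
  have hfm : ∀ k : ℕ, StronglyMeasurable fun c : ℝ => U ⌊c * (k : ℝ)⌋₊ / U k := fun k =>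
    ((measurable_from_top.comp ((measurable_id.mul_const _).nat_floor)).div_const _).stronglyMeasurable
  obtain ⟨t, -, -, htε, hunif⟩ := tendstoUniformlyOn_of_ae_tendsto (μ := volume) hfm
    (Real.continuous_rpow_const hγ).stronglyMeasurable measurableSet_Icc
    (by simp [Real.volume_Icc]) (ae_of_all _ fun c hc => hU c hc.1) hε
  refine ⟨t, htε, ?_⟩
  filter_upwards [Metric.tendstoUniformlyOn_iff.1 hunif ε hε] with k hk c hc
  -- `c ^ γ ≥ 1` turns the absolute error `ε` into a relative one
  have hc1 : 1 ≤ c ^ γ := Real.one_le_rpow hc.1.1 hγ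
  have := abs_sub_lt_iff.1 (Real.dist_eq _ _ ▸ hk c hc)
  constructor <;> nlinarith

theorem eventually_lt_mul (hU : IsRegularlyVarying U γ) (hUpos : ∀ n, 0 < U n) (hγ : 0 ≤ γ)
    {b L : ℝ} (hb : 1 ≤ b) (hL : b ^ γ < L) :
    ∀ᶠ n : ℕ in atTop, ∀ m : ℕ, n ≤ m → (m : ℝ) ≤ b * n → U m < L * U n := by
  have hsmall : ∀ᶠ ε in nhds (0 : ℝ), ε * (1 + b) < 1 :=
    ContinuousAt.eventually_lt (by fun_prop) continuousAt_const (by simp)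
  have hslack : ∀ᶠ ε in nhds (0 : ℝ), (1 + ε) / (1 - ε) * b ^ γ < L :=
    ContinuousAt.eventually_lt (by fun_prop (disch := norm_num)) continuousAt_const
      (by simpa using hL)
  obtain ⟨ε, ⟨hεb, hεL⟩, hε0 : 0 < ε⟩ :=
    ((hsmall.and hslack).filter_mono nhdsWithin_le_nhds |>.and
      (self_mem_nhdsWithin (s := Ioi 0))).exists
  obtain ⟨t, htε, hbounds⟩ := hU.exists_volume_le_eventually_bounds hγ (b + 1) hε0
  filter_upwards [eventually_forall_ge_atTop.2 hbounds, eventually_ge_atTop 1]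
    with n hn hn1 m hnm hmb
  exact (lt_mul_of_bounds_off_small_set hUpos hγ hb hε0 hεb htε hn1 hnm hmb hn).trans
    (mul_lt_mul_of_pos_right hεL (hUpos n))

end IsRegularlyVarying

def inflationRatios (U : ℕ → ℝ) (ρ : ℝ) (n : ℕ) : Set ℝ :=
  {x : ℝ | ∃ m : ℕ, n ≤ m ∧ ρ * U m ≥ U n ∧ x = (m : ℝ) / (n : ℝ)}

section inflationRatios

variable {U : ℕ → ℝ} {γ ρ : ℝ}

lemma bddBelow_inflationRatios (n : ℕ) : BddBelow (inflationRatios U ρ n) :=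
  ⟨0, by rintro x ⟨m, -, -, rfl⟩; positivity⟩

lemma eventually_exists_mem_inflationRatios_le (hU : IsRegularlyVarying U γ)
    (hUpos : ∀ n, 0 < U n) (hγ : 0 < γ) (hρ0 : 0 < ρ) (hρ1 : ρ ≤ 1) {c : ℝ}
    (hc : ρ⁻¹ ^ γ⁻¹ < c) :
    ∀ᶠ n : ℕ in atTop, ∃ x ∈ inflationRatios U ρ n, x ≤ c := by
  have hc1 : 1 ≤ c :=
    (Real.one_le_rpow (one_le_inv₀ hρ0 |>.2 hρ1) (by positivity)).trans hc.le
  have hcγ : ρ⁻¹ < c ^ γ :=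
    (Real.rpow_inv_lt_iff_of_pos (by positivity) (by positivity) hγ).1 hc
  filter_upwards [(hU c hc1).eventually (lt_mem_nhds hcγ), eventually_ge_atTop 1] with n hn hn1
  have hn0 : (0 : ℝ) < n := by exact_mod_cast hn1
  rw [lt_div_iff₀ (hUpos n), inv_mul_lt_iff₀ hρ0] at hn
  exact ⟨_, ⟨⌊c * n⌋₊, Nat.le_floor (by nlinarith), hn.le, rfl⟩,
    (div_le_iff₀ hn0).2 (Nat.floor_le (by positivity))⟩

lemma eventually_le_sInf_inflationRatios (hU : IsRegularlyVarying U γ)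
    (hUpos : ∀ n, 0 < U n) (hγ : 0 < γ) (hρ0 : 0 < ρ) (hρ1 : ρ ≤ 1) {b : ℝ}
    (hb : b < ρ⁻¹ ^ γ⁻¹) :
    ∀ᶠ n : ℕ in atTop, b ≤ sInf (inflationRatios U ρ n) := by
  have hkey : ∀ᶠ n : ℕ in atTop, ∀ m : ℕ, n ≤ m → ρ * U m ≥ U n → b * n ≤ m := by
    rcases lt_or_ge b 1 with hb1 | hb1
    · refine Eventually.of_forall fun n m hnm _ => ?_
      exact (mul_le_of_le_one_left n.cast_nonneg hb1.le).trans (by exact_mod_cast hnm)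
    · have hbγ : b ^ γ < ρ⁻¹ :=
        (Real.lt_rpow_inv_iff_of_pos (by positivity) (by positivity) hγ).1 hb
      filter_upwards [hU.eventually_lt_mul hUpos hγ.le hb1 hbγ] with n hn m hnm hρm
      by_contra! hmb
      exact ((lt_inv_mul_iff₀ hρ0).1 (hn m hnm hmb.le)).not_ge hρm
  filter_upwards [eventually_exists_mem_inflationRatios_le hU hUpos hγ hρ0 hρ1 (lt_add_one _),
    hkey, eventually_ge_atTop 1] with n hne hn hn1
  obtain ⟨x, hx, -⟩ := hne
  refine le_csInf ⟨x, hx⟩ ?_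
  rintro _ ⟨m, hnm, hρm, rfl⟩
  exact (le_div_iff₀ (by exact_mod_cast hn1)).2 (hn m hnm hρm)

theorem tendsto_sInf_inflationRatios (hU : IsRegularlyVarying U γ)
    (hUpos : ∀ n, 0 < U n) (hγ : 0 < γ) (hρ0 : 0 < ρ) (hρ1 : ρ ≤ 1) :
    Tendsto (fun n => sInf (inflationRatios U ρ n)) atTop (nhds (ρ⁻¹ ^ γ⁻¹)) := by
  refine tendsto_order.2 ⟨fun a ha => ?_, fun a ha => ?_⟩
  · obtain ⟨b, hab, hb⟩ := exists_between ha
    filter_upwards [eventually_le_sInf_inflationRatios hU hUpos hγ hρ0 hρ1 hb] with n hn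
    exact hab.trans_le hn
  · obtain ⟨c, hc, hca⟩ := exists_between ha
    filter_upwards [eventually_exists_mem_inflationRatios_le hU hUpos hγ hρ0 hρ1 hc]
      with n ⟨x, hx, hxc⟩
    exact (csInf_le (bddBelow_inflationRatios n) hx).trans_lt (hxc.trans_lt hca)

end inflationRatios

theorem competition_complexity (γ : ℝ) (hγ : γ ∈ Set.Ioo (0:ℝ) 1)
    (U : ℕ → ℝ) (hUpos : ∀ n, 0 < U n)
    (hrv : ∀ c : ℝ, 1 ≤ c →
      Tendsto (fun n : ℕ => U ⌊c * (n : ℝ)⌋₊ / U n) atTop (nhds (c ^ γ)))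
    (ρ : ℝ) (hρ : ρ ∈ Set.Ioc (0:ℝ) 1) :
    Filter.liminf
      (fun n : ℕ =>
        sInf {x : ℝ | ∃ m : ℕ, n ≤ m ∧ ρ * U m ≥ U n ∧ x = (m : ℝ) / (n : ℝ)})
      atTop
    = ρ ^ (-1 / γ) := by
  have hexp : ρ ^ (-1 / γ) = ρ⁻¹ ^ γ⁻¹ := by
    rw [Real.inv_rpow hρ.1.le, ← Real.rpow_neg hρ.1.le, neg_div, one_div]
  rw [hexp]
  exact (tendsto_sInf_inflationRatios hrv hUpos hγ.1 hρ.1 hρ.2).liminf_eq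
end
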